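/- Under a permutation-invariant (exchangeable in the K indices) joint distribution of (S, W, U_1,…,U_K, Y), for every nonempty subset A ⊆ {1,…,K}: (1/|A|)·I(U_A; Y, U_{K∖A} | S, W) ≥ (1/K)·I(U_{1..K}; Y | S, W). -/

import Mathlib

open scoped BigOperators Classical

/-- Shannon entropy (base 2) of a p.m.f. on a finite alphabet. -/
noncomputable def ent {α : Type*} [Fintype α] (p : α → ℝ) : ℝ :=
  -∑ a, p a * Real.logb 2 (p a)

/-- Distribution (pushforward p.m.f.) of a random variable `X` under `μ`. -/
noncomputable def pushf {Ω α : Type*} [Fintype Ω] (μ : Ω → ℝ) (X : Ω → α) : α → ℝ :=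
  fun a => ∑ ω ∈ Finset.univ.filter (fun ω => X ω = a), μ ω

/-- Shannon entropy of a random variable. -/
noncomputable def entRV {Ω α : Type*} [Fintype Ω] [Fintype α] (μ : Ω → ℝ) (X : Ω → α) : ℝ :=
  ent (pushf μ X)

/-- Conditional entropy `H(X|Z)`. -/
noncomputable def centRV {Ω α β : Type*} [Fintype Ω] [Fintype α] [Fintype β]
    (μ : Ω → ℝ) (X : Ω → α) (Z : Ω → β) : ℝ :=
  entRV μ (fun ω => (X ω, Z ω)) - entRV μ Z

/-- Mutual information `I(X;Y)`. -/
noncomputable def mi {Ω α β : Type*} [Fintype Ω] [Fintype α] [Fintype β]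
    (μ : Ω → ℝ) (X : Ω → α) (Y : Ω → β) : ℝ :=
  entRV μ X + entRV μ Y - entRV μ (fun ω => (X ω, Y ω))

/-- Conditional mutual information `I(X;Y|Z)`. -/
noncomputable def cmi {Ω α β γ : Type*} [Fintype Ω] [Fintype α] [Fintype β] [Fintype γ]
    (μ : Ω → ℝ) (X : Ω → α) (Y : Ω → β) (Z : Ω → γ) : ℝ :=
  centRV μ X Z + centRV μ Y Z - centRV μ (fun ω => (X ω, Y ω)) Z

/-- Kullback–Leibler divergence (base 2). -/
noncomputable def kl {α : Type*} [Fintype α] (p q : α → ℝ) : ℝ :=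
  ∑ a, p a * Real.logb 2 (p a / q a)

/-- `μ` is a probability mass function. -/
def IsPMF {Ω : Type*} [Fintype Ω] (μ : Ω → ℝ) : Prop :=
  (∀ ω, 0 ≤ μ ω) ∧ ∑ ω, μ ω = 1


/-!
Write `Z = (S, W)`, `h A = H(U_A, Z)` and `t A = H(U_A, Y, Z)`. The two conditional mutual
informations are `h univ - h ∅ + t ∅ - t univ` and `h A - h ∅ + t Aᶜ - t univ`. Both `h` and `t`
are submodular (Shannon's inequality `I(X; Y | Z) ≥ 0`, from Gibbs' inequality) and, by
exchangeability, depend only on `|A|`. Such a set function is concave in `|A|`, which is Han's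
inequality `|A| (f univ - f ∅) ≤ K (f A - f ∅)`. Applying it to `h` at `A` and to `t` at `Aᶜ`
and adding gives the claim.
-/

open Finset Real

section Pushforward
variable {Ω α β : Type*} [Fintype Ω]

lemma pushf_nonneg {μ : Ω → ℝ} (hμ : ∀ ω, 0 ≤ μ ω) (X : Ω → α) (a : α) : 0 ≤ pushf μ X a :=
  sum_nonneg fun ω _ => hμ ω

lemma le_pushf_apply {μ : Ω → ℝ} (hμ : ∀ ω, 0 ≤ μ ω) (X : Ω → α) (ω : Ω) :
    μ ω ≤ pushf μ X (X ω) :=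
  single_le_sum (fun ω _ => hμ ω) (mem_filter.2 ⟨mem_univ ω, rfl⟩)

lemma sum_pushf_mul [Fintype α] (μ : Ω → ℝ) (X : Ω → α) (F : α → ℝ) :
    ∑ a, pushf μ X a * F a = ∑ ω, μ ω * F (X ω) := by
  rw [← sum_fiberwise univ X fun ω => μ ω * F (X ω)]
  refine sum_congr rfl fun a _ => ?_
  rw [pushf, sum_mul]
  exact sum_congr rfl fun ω hω => by rw [(mem_filter.1 hω).2]

lemma sum_pushf [Fintype α] (μ : Ω → ℝ) (X : Ω → α) : ∑ a, pushf μ X a = ∑ ω, μ ω := by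
  simpa using sum_pushf_mul μ X fun _ => 1

lemma pushf_apply_eq_sum (μ : Ω → ℝ) (X : Ω → α) (a : α) :
    pushf μ X a = ∑ ω, μ ω * if X ω = a then 1 else 0 := by
  simp [pushf, sum_filter]

lemma pushf_comp [Fintype α] (μ : Ω → ℝ) (X : Ω → α) (g : α → β) :
    pushf μ (fun ω => g (X ω)) = pushf (pushf μ X) g := by
  funext b
  rw [pushf_apply_eq_sum, pushf_apply_eq_sum, sum_pushf_mul]

lemma pushf_comp_congr [Fintype α] {μ : Ω → ℝ} {X X' : Ω → α} (h : pushf μ X = pushf μ X')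
    (g : α → β) : pushf μ (fun ω => g (X ω)) = pushf μ (fun ω => g (X' ω)) := by
  rw [pushf_comp μ X, pushf_comp μ X', h]

lemma pushf_le_pushf_comp [Fintype α] {μ : Ω → ℝ} (hμ : ∀ ω, 0 ≤ μ ω) (X : Ω → α) (g : α → β)
    (a : α) :
    pushf μ X a ≤ pushf μ (fun ω => g (X ω)) (g a) := by
  rw [pushf_comp μ X g]
  exact le_pushf_apply (pushf_nonneg hμ X) g a

lemma sum_pushf_prod_apply {γ : Type*} [Fintype β] (μ : Ω → ℝ) (Y : Ω → β) (Z : Ω → γ) (c : γ) :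
    ∑ b, pushf μ (fun ω => (Y ω, Z ω)) (b, c) = pushf μ Z c := by
  rw [pushf, ← sum_fiberwise _ Y]
  refine sum_congr rfl fun b _ => ?_
  rw [pushf, filter_filter]
  simp [and_comm]

end Pushforward

section Entropy
variable {Ω α β : Type*} [Fintype Ω] [Fintype α] [Fintype β]

lemma ent_pushf (q : α → ℝ) (f : α → β) :
    ent (pushf q f) = -∑ a, q a * logb 2 (pushf q f (f a)) := by
  rw [ent, sum_pushf_mul]

lemma ent_pushf_of_injOn (q : α → ℝ) {f : α → β} (hf : Set.InjOn f (Function.support q)) :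
    ent (pushf q f) = ent q := by
  rw [ent_pushf, ent, neg_inj]
  refine sum_congr rfl fun a _ => ?_
  by_cases ha : q a = 0
  · simp [ha]
  rw [pushf, sum_eq_single_of_mem a (by simp) fun a' ha' hne => ?_]
  by_contra h
  exact hne (hf h ha (mem_filter.1 ha').2)

lemma entRV_eq_of_comp (μ : Ω → ℝ) {X : Ω → α} {X' : Ω → β} (f : α → β) (g : β → α)
    (hf : ∀ ω, X' ω = f (X ω)) (hg : ∀ ω, X ω = g (X' ω)) : entRV μ X' = entRV μ X := by
  obtain rfl : X' = fun ω => f (X ω) := funext hf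
  rw [entRV, entRV, pushf_comp]
  refine ent_pushf_of_injOn _ (Set.LeftInvOn.injOn (f₁' := g) fun a ha => ?_)
  obtain ⟨ω, rfl⟩ : ∃ ω, X ω = a := by
    by_contra! h
    exact ha (sum_eq_zero fun ω hω => absurd (mem_filter.1 hω).2 (h ω))
  exact (hg ω).symm

lemma entRV_eq_neg_sum (μ : Ω → ℝ) (X : Ω → α) :
    entRV μ X = -∑ ω, μ ω * logb 2 (pushf μ X (X ω)) := by
  rw [entRV, ent, sum_pushf_mul]

end Entropy

lemma sum_mul_logb_le_sum_mul_logb {α : Type*} [Fintype α] {p q : α → ℝ} (hp : ∀ a, 0 ≤ p a)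
    (hq : ∀ a, 0 ≤ q a) (hpq : ∀ a, 0 < p a → 0 < q a) (hsum : ∑ a, q a ≤ ∑ a, p a) :
    ∑ a, p a * logb 2 (q a) ≤ ∑ a, p a * logb 2 (p a) := by
  have hlog2 : 0 < log 2 := log_pos one_lt_two
  have hterm : ∀ a, p a * logb 2 (q a) - p a * logb 2 (p a) ≤ (q a - p a) / log 2 := by
    intro a
    rcases (hp a).eq_or_lt with hpa | hpa
    · simpa [← hpa] using div_nonneg (hq a) hlog2.le
    have hqa := hpq a hpa
    have hlog := log_le_sub_one_of_pos (div_pos hqa hpa)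
    rw [← mul_sub, ← logb_div hqa.ne' hpa.ne', logb, ← mul_div_assoc]
    gcongr
    calc p a * log (q a / p a) ≤ p a * (q a / p a - 1) := by gcongr
      _ = q a - p a := by field_simp
  have hsum' : ∑ a, (q a - p a) / log 2 ≤ 0 := by
    rw [← sum_div, sum_sub_distrib]
    exact div_nonpos_of_nonpos_of_nonneg (by linarith) hlog2.le
  linarith [sum_le_sum fun a (_ : a ∈ univ) => hterm a, sum_sub_distrib (s := univ)
    (f := fun a => p a * logb 2 (q a)) (g := fun a => p a * logb 2 (p a))]

section Submodularity
variable {Ω α β γ : Type*} [Fintype Ω] [Fintype α] [Fintype β] [Fintype γ] {μ : Ω → ℝ}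
  (X : Ω → α) (Y : Ω → β) (Z : Ω → γ)

lemma sum_pushf_mul_pushf_div_le (hμ : ∀ ω, 0 ≤ μ ω) :
    ∑ t : α × β × γ, pushf μ (fun ω => (X ω, Z ω)) (t.1, t.2.2) *
      pushf μ (fun ω => (Y ω, Z ω)) (t.2.1, t.2.2) / pushf μ Z t.2.2 ≤ ∑ ω, μ ω := by
  set pXZ := pushf μ (fun ω => (X ω, Z ω))
  calc _ = ∑ x, ∑ z, pXZ (x, z) * ((∑ y, pushf μ (fun ω => (Y ω, Z ω)) (y, z)) / pushf μ Z z) := by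
        simp_rw [Fintype.sum_prod_type]
        exact sum_congr rfl fun x _ => by
          rw [sum_comm]; simp_rw [mul_div_assoc, ← mul_sum, ← sum_div]
    _ = ∑ x, ∑ z, pXZ (x, z) * (pushf μ Z z / pushf μ Z z) := by simp_rw [sum_pushf_prod_apply]
    _ ≤ ∑ x, ∑ z, pXZ (x, z) := by
        gcongr with x _ z _
        exact mul_le_of_le_one_right (pushf_nonneg hμ _ _) (div_self_le_one _)
    _ = ∑ ω, μ ω := by rw [← Fintype.sum_prod_type', sum_pushf]

theorem entRV_add_entRV_le (hμ : ∀ ω, 0 ≤ μ ω) :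
    entRV μ (fun ω => (X ω, Y ω, Z ω)) + entRV μ Z ≤
      entRV μ (fun ω => (X ω, Z ω)) + entRV μ (fun ω => (Y ω, Z ω)) := by
  set p := pushf μ (fun ω => (X ω, Y ω, Z ω))
  set pXZ := pushf μ (fun ω => (X ω, Z ω))
  set pYZ := pushf μ (fun ω => (Y ω, Z ω))
  set pZ := pushf μ Z
  set q : α × β × γ → ℝ := fun t => pXZ (t.1, t.2.2) * pYZ (t.2.1, t.2.2) / pZ t.2.2
  have hq : ∀ t, 0 ≤ q t := fun t =>
    div_nonneg (mul_nonneg (pushf_nonneg hμ _ _) (pushf_nonneg hμ _ _)) (pushf_nonneg hμ _ _)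
  have hpq : ∀ t, 0 < p t → 0 < q t := fun t ht =>
    div_pos (mul_pos (ht.trans_le (pushf_le_pushf_comp hμ _ (fun t => (t.1, t.2.2)) t))
      (ht.trans_le (pushf_le_pushf_comp hμ _ (fun t => (t.2.1, t.2.2)) t)))
      (ht.trans_le (pushf_le_pushf_comp hμ _ (fun t => t.2.2) t))
  have hgibbs : ∑ t, p t * logb 2 (q t) ≤ ∑ t, p t * logb 2 (p t) :=
    sum_mul_logb_le_sum_mul_logb (pushf_nonneg hμ _) hq hpq
      (by rw [sum_pushf]; exact sum_pushf_mul_pushf_div_le X Y Z hμ)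
  have hterm : ∀ ω, μ ω * logb 2 (q (X ω, Y ω, Z ω)) = μ ω * logb 2 (pXZ (X ω, Z ω)) +
      μ ω * logb 2 (pYZ (Y ω, Z ω)) - μ ω * logb 2 (pZ (Z ω)) := by
    intro ω
    rcases (hμ ω).eq_or_lt with h | h
    · simp [← h]
    have hXZ := h.trans_le (le_pushf_apply hμ (fun ω => (X ω, Z ω)) ω)
    have hYZ := h.trans_le (le_pushf_apply hμ (fun ω => (Y ω, Z ω)) ω)
    have hZ := h.trans_le (le_pushf_apply hμ Z ω)
    rw [logb_div (mul_pos hXZ hYZ).ne' hZ.ne', logb_mul hXZ.ne' hYZ.ne']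
    ring
  have hcross : ∑ t, p t * logb 2 (q t) =
      entRV μ Z - entRV μ (fun ω => (X ω, Z ω)) - entRV μ (fun ω => (Y ω, Z ω)) := by
    rw [sum_pushf_mul, sum_congr rfl fun ω _ => hterm ω, sum_sub_distrib, sum_add_distrib,
      entRV_eq_neg_sum μ Z, entRV_eq_neg_sum μ (fun ω => (X ω, Z ω)),
      entRV_eq_neg_sum μ (fun ω => (Y ω, Z ω))]
    ring
  have hjoint : entRV μ (fun ω => (X ω, Y ω, Z ω)) = -∑ t, p t * logb 2 (p t) := rfl
  linarith

end Submodularity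

lemma mul_sub_le_mul_sub_of_sub_antitone {g : ℕ → ℝ} {n : ℕ}
    (hg : ∀ m j, m ≤ j → j < n → g (j + 1) - g j ≤ g (m + 1) - g m) {b : ℕ} (hb : b ≤ n) :
    b * (g n - g 0) ≤ n * (g b - g 0) := by
  induction n, hb using Nat.le_induction with
  | base => rfl
  | succ n hbn ih =>
    have hstep : b * (g (n + 1) - g n) ≤ g b - g 0 := by
      rw [← sum_range_sub]
      simpa using card_nsmul_le_sum (range b) _ _ fun m hm =>
        hg m n (by simp at hm; omega) (by omega)
    push_cast
    linarith [ih fun m j hmj hj => hg m j hmj (by omega)]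

theorem card_mul_sub_le_of_submodular {ι : Type*} [Fintype ι] [DecidableEq ι]
    {f : Finset ι → ℝ} (hsub : ∀ A B, f (A ∪ B) + f (A ∩ B) ≤ f A + f B)
    (hsymm : ∀ A B, #A = #B → f A = f B) (A : Finset ι) :
    #A * (f univ - f ∅) ≤ Fintype.card ι * (f A - f ∅) := by
  obtain ⟨g, hg⟩ : ∃ g : ℕ → ℝ, ∀ A, f A = g #A :=
    ⟨fun m => f (Classical.epsilon fun s => #s = m),
      fun A => hsymm _ _ (Classical.epsilon_spec (p := fun s : Finset ι => #s = #A) ⟨A, rfl⟩).symm⟩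
  have hinc : ∀ m j, m ≤ j → j < Fintype.card ι → g (j + 1) - g j ≤ g (m + 1) - g m := by
    intro m j hmj hj
    obtain ⟨B, -, hB⟩ := exists_subset_card_eq (s := univ) (n := j) (by simpa using hj.le)
    obtain ⟨k, hk⟩ : ∃ k, k ∉ B := by
      by_contra! h
      rw [eq_univ_of_forall h, card_univ] at hB
      omega
    obtain ⟨C, hCB, hC⟩ := exists_subset_card_eq (hmj.trans hB.ge)
    have h := hsub (insert k C) B
    rw [insert_union, union_eq_right.2 hCB, insert_inter_of_notMem hk, inter_eq_left.2 hCB,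
      hg, hg, hg, hg, card_insert_of_notMem hk, card_insert_of_notMem (fun h => hk (hCB h)),
      hB, hC] at h
    linarith
  rw [hg univ, hg ∅, hg A, card_univ, card_empty]
  exact mul_sub_le_mul_sub_of_sub_antitone hinc (card_le_univ A)

section Exchangeable
variable {Ω ι α ε : Type*} [Fintype Ω] [DecidableEq ι] [Fintype α] [Fintype ε]

noncomputable def jointEnt (μ : Ω → ℝ) (R : Ω → ε) (U : ι → Ω → α) (A : Finset ι) : ℝ :=
  entRV μ (fun ω => ((fun a : A => U a ω), R ω))

def Exchangeable (μ : Ω → ℝ) (R : Ω → ε) (U : ι → Ω → α) : Prop :=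
  ∀ σ : Equiv.Perm ι,
    pushf μ (fun ω => (R ω, fun i => U (σ i) ω)) = pushf μ (fun ω => (R ω, fun i => U i ω))

variable {μ : Ω → ℝ} {R : Ω → ε} {U : ι → Ω → α}

lemma jointEnt_empty :
    jointEnt μ R U ∅ = entRV μ R :=
  entRV_eq_of_comp μ (fun r => (fun a => absurd a.2 (notMem_empty a.1), r)) Prod.snd
    (fun _ => Prod.ext (funext fun a => absurd a.2 (notMem_empty a.1)) rfl) fun _ => rfl

lemma entRV_restrict_pair (C D : Finset ι) :
    entRV μ (fun ω => ((fun c : C => U c ω), (fun d : D => U d ω), R ω)) =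
      entRV μ (fun ω => ((fun i : ↥(C ∪ D) => U i ω), R ω)) :=
  entRV_eq_of_comp μ
    (fun p => ((fun c => p.1 ⟨c, mem_union_left _ c.2⟩),
      (fun d => p.1 ⟨d, mem_union_right _ d.2⟩), p.2))
    (fun p => ((fun i => if h : i.1 ∈ C then p.1 ⟨i, h⟩
      else p.2.1 ⟨i, (mem_union.1 i.2).resolve_left h⟩), p.2.2))
    (fun _ => rfl) fun ω => Prod.ext (funext fun i => by dsimp only; split_ifs <;> rfl) rfl

theorem jointEnt_union_add_inter_le (hμ : ∀ ω, 0 ≤ μ ω) (A B : Finset ι) :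
    jointEnt μ R U (A ∪ B) + jointEnt μ R U (A ∩ B) ≤ jointEnt μ R U A + jointEnt μ R U B := by
  have h := entRV_add_entRV_le (fun ω (a : ↥(A \ B)) => U a ω) (fun ω (b : ↥(B \ A)) => U b ω)
    (fun ω => ((fun c : ↥(A ∩ B) => U c ω), R ω)) hμ
  have hA : A \ B ∪ A ∩ B = A := sdiff_union_inter A B
  have hB : B \ A ∪ A ∩ B = B := by rw [inter_comm, sdiff_union_inter]
  have hAB : A \ B ∪ B \ A ∪ A ∩ B = A ∪ B := by
    ext; simp only [mem_union, mem_sdiff, mem_inter]; tauto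
  simp only [entRV_restrict_pair] at h
  rwa [hA, hB, hAB] at h

lemma Exchangeable.comp [Fintype ι] {ε' : Type*} (h : Exchangeable μ R U) (r : ε → ε') :
    Exchangeable μ (fun ω => r (R ω)) U :=
  fun σ => pushf_comp_congr (h σ) fun p => (r p.1, p.2)

theorem Exchangeable.jointEnt_eq_of_card_eq [Fintype ι] (h : Exchangeable μ R U) {A B : Finset ι}
    (hAB : #A = #B) : jointEnt μ R U A = jointEnt μ R U B := by
  set e : A ≃ B := equivOfCardEq hAB
  have hσ : ∀ a : A, e.extendSubtype a = e a := fun a => e.extendSubtype_apply_of_mem a a.2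
  calc jointEnt μ R U A
      = entRV μ (fun ω => ((fun a : A => U (e.extendSubtype a) ω), R ω)) :=
        congrArg ent (pushf_comp_congr (h e.extendSubtype) fun p => (fun a : A => p.2 a, p.1)).symm
    _ = jointEnt μ R U B :=
        entRV_eq_of_comp μ (fun p : (B → α) × ε => (fun a => p.1 (e a), p.2))
          (fun p => (fun b => p.1 (e.symm b), p.2)) (fun ω => by simp [hσ]) fun ω => by simp [hσ]

theorem Exchangeable.card_mul_sub_le [Fintype ι] (h : Exchangeable μ R U) (hμ : ∀ ω, 0 ≤ μ ω)
    (A : Finset ι) :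
    #A * (jointEnt μ R U univ - jointEnt μ R U ∅) ≤
      Fintype.card ι * (jointEnt μ R U A - jointEnt μ R U ∅) :=
  card_mul_sub_le_of_submodular (jointEnt_union_add_inter_le hμ)
    (fun _ _ => h.jointEnt_eq_of_card_eq) A

end Exchangeable

section ConditionalMutualInformation
variable {Ω ι α γ δ : Type*} [Fintype Ω] [Fintype ι] [DecidableEq ι] [Fintype α] [Fintype γ]
  [Fintype δ]
  (μ : Ω → ℝ) (U : ι → Ω → α) (Y : Ω → δ) (Z : Ω → γ)

lemma cmi_eq_jointEnt :
    cmi μ (fun ω i => U i ω) Y Z =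
      jointEnt μ Z U univ - jointEnt μ Z U ∅ + jointEnt μ (fun ω => (Y ω, Z ω)) U ∅ -
        jointEnt μ (fun ω => (Y ω, Z ω)) U univ := by
  have hUZ : jointEnt μ Z U univ = entRV μ (fun ω => ((fun i => U i ω), Z ω)) :=
    entRV_eq_of_comp μ (fun p => (fun a => p.1 a, p.2))
      (fun p => (fun i => p.1 ⟨i, mem_univ i⟩, p.2)) (fun _ => rfl) fun _ => rfl
  have hUYZ : jointEnt μ (fun ω => (Y ω, Z ω)) U univ =
      entRV μ (fun ω => (((fun i => U i ω), Y ω), Z ω)) :=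
    entRV_eq_of_comp μ (fun p => ((fun a => p.1.1 a), p.1.2, p.2))
      (fun p => ((fun i => p.1 ⟨i, mem_univ i⟩, p.2.1), p.2.2)) (fun _ => rfl) fun _ => rfl
  rw [hUZ, hUYZ, jointEnt_empty, jointEnt_empty, cmi, centRV, centRV, centRV]
  ring

lemma cmi_restrict_eq_jointEnt (A : Finset ι) :
    cmi μ (fun ω (a : A) => U a ω) (fun ω => (Y ω, fun a : {i // i ∉ A} => U a ω)) Z =
      jointEnt μ Z U A - jointEnt μ Z U ∅ + jointEnt μ (fun ω => (Y ω, Z ω)) U Aᶜ -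
        jointEnt μ (fun ω => (Y ω, Z ω)) U univ := by
  have hYZ : jointEnt μ (fun ω => (Y ω, Z ω)) U Aᶜ =
      entRV μ (fun ω => ((Y ω, fun a : {i // i ∉ A} => U a ω), Z ω)) :=
    entRV_eq_of_comp μ (fun p => (fun a => p.1.2 ⟨a, mem_compl.1 a.2⟩, p.1.1, p.2))
      (fun p => ((p.2.1, fun a => p.1 ⟨a, mem_compl.2 a.2⟩), p.2.2)) (fun _ => rfl) fun _ => rfl
  have hUYZ : jointEnt μ (fun ω => (Y ω, Z ω)) U univ =
      entRV μ (fun ω => (((fun a : A => U a ω), (Y ω, fun a : {i // i ∉ A} => U a ω)), Z ω)) :=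
    entRV_eq_of_comp μ
      (fun p => (fun i => if h : i.1 ∈ A then p.1.1 ⟨i, h⟩ else p.1.2.2 ⟨i, h⟩, p.1.2.1, p.2))
      (fun p => ((fun a => p.1 ⟨a, mem_univ _⟩, p.2.1, fun a => p.1 ⟨a, mem_univ _⟩), p.2.2))
      (fun _ => Prod.ext (funext fun i => by dsimp only; split_ifs <;> rfl) rfl) fun _ => rfl
  rw [hYZ, hUYZ, jointEnt_empty, cmi, centRV, centRV, centRV, jointEnt]
  ring

end ConditionalMutualInformation

theorem normalized_cmi_ge_of_exchangeable_general {Ω α β γ δ : Type*} [Fintype Ω]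
    [Fintype α] [Fintype β] [Fintype γ] [Fintype δ]
    (μ : Ω → ℝ) (hμ : IsPMF μ) {K : ℕ}
    (S : Ω → β) (W : Ω → γ) (Y : Ω → δ) (U : Fin K → Ω → α)
    (hexch : ∀ σ : Equiv.Perm (Fin K),
      pushf μ (fun ω => (S ω, W ω, (fun i => U (σ i) ω), Y ω)) =
        pushf μ (fun ω => (S ω, W ω, (fun i => U i ω), Y ω))) :
    ∀ A : Finset (Fin K), A.Nonempty →
      (1 / (K : ℝ)) * cmi μ (fun ω => (fun i => U i ω)) Y (fun ω => (S ω, W ω)) ≤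
        (1 / (A.card : ℝ)) *
          cmi μ (fun ω => (fun a : {i : Fin K // i ∈ A} => U a.1 ω))
            (fun ω => (Y ω, (fun a : {i : Fin K // i ∉ A} => U a.1 ω)))
            (fun ω => (S ω, W ω)) := by
  intro A hA
  have hYSW : Exchangeable μ (fun ω => (Y ω, S ω, W ω)) U := fun σ =>
    pushf_comp_congr (hexch σ) fun p => ((p.2.2.2, p.1, p.2.1), p.2.2.1)
  have hSW : Exchangeable μ (fun ω => (S ω, W ω)) U := hYSW.comp Prod.snd
  have hHan := hSW.card_mul_sub_le hμ.1 A
  have hHanY := hYSW.card_mul_sub_le hμ.1 Aᶜ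
  have hAK : #A ≤ K := (card_le_univ A).trans_eq (Fintype.card_fin K)
  have hA0 : (0 : ℝ) < #A := by exact_mod_cast hA.card_pos
  have hK0 : (0 : ℝ) < K := hA0.trans_le (by exact_mod_cast hAK)
  rw [card_compl, Fintype.card_fin, Nat.cast_sub hAK] at hHanY
  rw [Fintype.card_fin] at hHan
  rw [cmi_eq_jointEnt μ U Y (fun ω => (S ω, W ω)),
    cmi_restrict_eq_jointEnt μ U Y (fun ω => (S ω, W ω)), one_div_mul_eq_div, one_div_mul_eq_div,
    div_le_div_iff₀ hK0 hA0]
  linarith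

/-- Under an exchangeable (in the `K` indices of `U`) joint distribution of
`(S, W, U_1, …, U_K, Y)`, for every nonempty `A ⊆ {1,…,K}`:
`(1/|A|)·I(U_A; Y, U_{K∖A} | S, W) ≥ (1/K)·I(U_{1..K}; Y | S, W)`. -/
theorem normalized_cmi_ge_of_exchangeable {Ω α β γ δ : Type*} [Fintype Ω]
    [Fintype α] [Fintype β] [Fintype γ] [Fintype δ]
    (μ : Ω → ℝ) (hμ : IsPMF μ) {K : ℕ} (hK : 0 < K)
    (S : Ω → β) (W : Ω → γ) (Y : Ω → δ) (U : Fin K → Ω → α)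
    (hexch : ∀ σ : Equiv.Perm (Fin K),
      pushf μ (fun ω => (S ω, W ω, (fun i => U (σ i) ω), Y ω)) =
        pushf μ (fun ω => (S ω, W ω, (fun i => U i ω), Y ω))) :
    ∀ A : Finset (Fin K), A.Nonempty →
      (1 / (K : ℝ)) * cmi μ (fun ω => (fun i => U i ω)) Y (fun ω => (S ω, W ω)) ≤
        (1 / (A.card : ℝ)) *
          cmi μ (fun ω => (fun a : {i : Fin K // i ∈ A} => U a.1 ω))
            (fun ω => (Y ω, (fun a : {i : Fin K // i ∉ A} => U a.1 ω)))
            (fun ω => (S ω, W ω)) :=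
  normalized_cmi_ge_of_exchangeable_general μ hμ S W Y U hexch
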